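/- If the curvature operator of the second kind R̊ is two-positive (i.e. λ₁ + λ₂ > 0), then R has positive sectional curvature: R(x,y,x,y) > 0 for all orthonormal pairs x,y ∈ V. Likewise, if R̊ is two-nonnegative (λ₁ + λ₂ ≥ 0), then R(x,y,x,y) ≥ 0 for all orthonormal x,y. -/

import Mathlib

open scoped RealInnerProductSpace

noncomputable section

/-- The partial sum `λ₁ + ⋯ + λ_a` of the (sorted) values of `lam`, for a real index
`a`, i.e. `λ₁ + ⋯ + λ_⌊a⌋ + (a - ⌊a⌋)·λ_{⌊a⌋+1}`. -/
def psum {N : ℕ} (lam : Fin N → ℝ) (a : ℝ) : ℝ :=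
  (∑ i : Fin N, if (i : ℕ) < ⌊a⌋₊ then lam i else 0) +
    (a - (⌊a⌋₊ : ℝ)) * (if h : ⌊a⌋₊ < N then lam ⟨⌊a⌋₊, h⟩ else 0)

/-- The average of the values of `lam`. -/
def lamBar {N : ℕ} (lam : Fin N → ℝ) : ℝ := (∑ i, lam i) / (N : ℝ)

/-- The cone condition `C(a, θ)`: `a⁻¹(λ₁ + ⋯ + λ_a) ≥ -θ·λ̄`. -/
def inC {N : ℕ} (lam : Fin N → ℝ) (a θ : ℝ) : Prop :=
  -θ * lamBar lam ≤ a⁻¹ * psum lam a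

/-- The open cone condition `C̊(a, θ)`: `a⁻¹(λ₁ + ⋯ + λ_a) > -θ·λ̄`. -/
def inCint {N : ℕ} (lam : Fin N → ℝ) (a θ : ℝ) : Prop :=
  -θ * lamBar lam < a⁻¹ * psum lam a

variable {V : Type*} [NormedAddCommGroup V] [InnerProductSpace ℝ V]

/-- A quadrilinear form on `V`. -/
abbrev CurvMap (V : Type*) [NormedAddCommGroup V] [InnerProductSpace ℝ V] :=
  V →ₗ[ℝ] V →ₗ[ℝ] V →ₗ[ℝ] V →ₗ[ℝ] ℝ

/-- `R` is an algebraic curvature tensor. -/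
structure IsAlgCurv (R : CurvMap V) : Prop where
  antisymm : ∀ x y z w : V, R x y z w = - R y x z w
  pairSymm : ∀ x y z w : V, R x y z w = R z w x y
  bianchi : ∀ x y z w : V, R x y z w + R y z x w + R z x y w = 0

/-- The scalar curvature `S = Σ_{i,j} R_{ijij}` (w.r.t. the orthonormal basis `e`). -/
def scal {n : ℕ} (R : CurvMap V) (e : Fin n → V) : ℝ :=
  ∑ i, ∑ j, R (e i) (e j) (e i) (e j)

/-- The Ricci tensor `Ric(x,y) = Σ_i R(x, e_i, y, e_i)`. -/
def ric {n : ℕ} (R : CurvMap V) (e : Fin n → V) (x y : V) : ℝ :=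
  ∑ i, R x (e i) y (e i)

/-- The bilinear form `R̊(φ,ψ) = Σ_{i,j,k,l} R_{iklj} φ_{kl} ψ_{ij}` of the curvature
operator of the second kind, acting on components of two-tensors in the
orthonormal basis `e`. -/
def sok {n : ℕ} (R : CurvMap V) (e : Fin n → V) (φ ψ : Fin n → Fin n → ℝ) : ℝ :=
  ∑ i, ∑ j, ∑ k, ∑ l, R (e i) (e k) (e l) (e j) * φ k l * ψ i j

/-- The inner product `⟨φ,ψ⟩ = Σ_{i,j} φ_{ij} ψ_{ij}` on (components of) two-tensors. -/
def tip {n : ℕ} (φ ψ : Fin n → Fin n → ℝ) : ℝ := ∑ i, ∑ j, φ i j * ψ i j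

/-- `φ` is (the component matrix of) a symmetric traceless two-tensor. -/
def IsSymTr {n : ℕ} (φ : Fin n → Fin n → ℝ) : Prop :=
  (∀ i j, φ i j = φ j i) ∧ (∑ i, φ i i) = 0

/-- `lam` and `Φ` are the increasingly sorted eigenvalues, and corresponding
orthonormal eigentensors, of the curvature operator of the second kind of `R`
(expressed in components w.r.t. the orthonormal basis `e`). -/
def IsEigenSystem {n N : ℕ} (R : CurvMap V) (e : Fin n → V) (lam : Fin N → ℝ)
    (Φ : Fin N → Fin n → Fin n → ℝ) : Prop :=
  Monotone lam ∧ (∀ β, IsSymTr (Φ β)) ∧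
    (∀ β γ, tip (Φ β) (Φ γ) = if β = γ then 1 else 0) ∧
    (∀ β (ψ : Fin n → Fin n → ℝ), IsSymTr ψ → sok R e (Φ β) ψ = lam β * tip (Φ β) ψ)

/-- `R` has nonnegative isotropic curvature. -/
def NonnegIsotropic (R : CurvMap V) : Prop :=
  ∀ v : Fin 4 → V, Orthonormal ℝ v →
    0 ≤ R (v 0) (v 2) (v 0) (v 2) + R (v 0) (v 3) (v 0) (v 3) +
        R (v 1) (v 2) (v 1) (v 2) + R (v 1) (v 3) (v 1) (v 3) -
        2 * R (v 0) (v 1) (v 2) (v 3)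

/-- `R` has positive isotropic curvature. -/
def PosIsotropic (R : CurvMap V) : Prop :=
  ∀ v : Fin 4 → V, Orthonormal ℝ v →
    0 < R (v 0) (v 2) (v 0) (v 2) + R (v 0) (v 3) (v 0) (v 3) +
        R (v 1) (v 2) (v 1) (v 2) + R (v 1) (v 3) (v 1) (v 3) -
        2 * R (v 0) (v 1) (v 2) (v 3)

section StmtFourAux

lemma tip_prod {n : ℕ} (φ ψ : Fin n → Fin n → ℝ) :
    tip φ ψ = ∑ p : Fin n × Fin n, φ p.1 p.2 * ψ p.1 p.2 := by
  rw [tip, Fintype.sum_prod_type]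


lemma sum_comm4 {n N : ℕ} (F : Fin n → Fin n → Fin n → Fin n → Fin N → ℝ) :
    (∑ i, ∑ j, ∑ k, ∑ l, ∑ β, F i j k l β) = ∑ β, ∑ i, ∑ j, ∑ k, ∑ l, F i j k l β := by
  calc (∑ i, ∑ j, ∑ k, ∑ l, ∑ β, F i j k l β)
      = ∑ i, ∑ j, ∑ k, ∑ β, ∑ l, F i j k l β :=
        Finset.sum_congr rfl fun i _ => Finset.sum_congr rfl fun j _ =>
          Finset.sum_congr rfl fun k _ => Finset.sum_comm
    _ = ∑ i, ∑ j, ∑ β, ∑ k, ∑ l, F i j k l β :=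
        Finset.sum_congr rfl fun i _ => Finset.sum_congr rfl fun j _ => Finset.sum_comm
    _ = ∑ i, ∑ β, ∑ j, ∑ k, ∑ l, F i j k l β :=
        Finset.sum_congr rfl fun i _ => Finset.sum_comm
    _ = ∑ β, ∑ i, ∑ j, ∑ k, ∑ l, F i j k l β := Finset.sum_comm

lemma tip_comm {n : ℕ} (φ ψ : Fin n → Fin n → ℝ) : tip φ ψ = tip ψ φ := by
  simp [tip, mul_comm]

lemma tip_sum_left {n N : ℕ} (c : Fin N → ℝ) (g : Fin N → Fin n → Fin n → ℝ)
    (ψ : Fin n → Fin n → ℝ) :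
    tip (∑ β, c β • g β) ψ = ∑ β, c β * tip (g β) ψ := by
  simp only [tip_prod, Finset.sum_apply, Pi.smul_apply, smul_eq_mul, Finset.sum_mul]
  rw [Finset.sum_comm]
  refine Finset.sum_congr rfl fun β _ => ?_
  rw [Finset.mul_sum]
  exact Finset.sum_congr rfl fun p _ => by ring

lemma sok_sum_left {V : Type*} [NormedAddCommGroup V] [InnerProductSpace ℝ V] {n N : ℕ}
    (R : CurvMap V) (e : Fin n → V) (c : Fin N → ℝ) (g : Fin N → Fin n → Fin n → ℝ)
    (ψ : Fin n → Fin n → ℝ) :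
    sok R e (∑ β, c β • g β) ψ = ∑ β, c β * sok R e (g β) ψ := by
  have h1 : sok R e (∑ β, c β • g β) ψ
      = ∑ i, ∑ j, ∑ k, ∑ l, ∑ β, c β * (R (e i) (e k) (e l) (e j) * g β k l * ψ i j) := by
    rw [sok]
    refine Finset.sum_congr rfl fun i _ => Finset.sum_congr rfl fun j _ =>
      Finset.sum_congr rfl fun k _ => Finset.sum_congr rfl fun l _ => ?_
    simp only [Finset.sum_apply, Pi.smul_apply, smul_eq_mul, Finset.sum_mul, Finset.mul_sum]
    exact Finset.sum_congr rfl fun β _ => by ring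
  rw [h1, sum_comm4]
  refine Finset.sum_congr rfl fun β _ => ?_
  simp only [sok, Finset.mul_sum]

lemma tip_rank1 {n : ℕ} (A B C D : Fin n → ℝ) :
    ∑ i, ∑ j, (A i * B j) * (C i * D j) = (∑ i, A i * C i) * (∑ j, B j * D j) := by
  rw [Finset.sum_mul_sum]
  exact Finset.sum_congr rfl fun i _ => Finset.sum_congr rfl fun j _ => by ring

lemma quad_expand {V : Type*} [NormedAddCommGroup V] [InnerProductSpace ℝ V] {n : ℕ}
    (R : CurvMap V) (e : Fin n → V) (A B C D : Fin n → ℝ) (a b c d : V)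
    (hA : ∑ k, A k • e k = a) (hB : ∑ k, B k • e k = b)
    (hC : ∑ k, C k • e k = c) (hD : ∑ k, D k • e k = d) :
    ∑ i, ∑ j, ∑ k, ∑ l, R (e i) (e k) (e l) (e j) * (A k * B l) * (C i * D j)
      = R c a b d := by
  have col4 : ∀ u v w : V, ∑ j, D j * R u v w (e j) = R u v w d := by
    intro u v w
    rw [← hD, map_sum]
    exact Finset.sum_congr rfl fun j _ => by rw [map_smul, smul_eq_mul]
  have col3 : ∀ u v : V, ∑ l, B l * R u v (e l) d = R u v b d := by
    intro u v
    rw [← hB, map_sum, LinearMap.sum_apply]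
    exact Finset.sum_congr rfl fun l _ => by
      rw [map_smul, LinearMap.smul_apply, smul_eq_mul]
  have col2 : ∀ u : V, ∑ k, A k * R u (e k) b d = R u a b d := by
    intro u
    rw [← hA, map_sum, LinearMap.sum_apply, LinearMap.sum_apply]
    exact Finset.sum_congr rfl fun k _ => by
      rw [map_smul, LinearMap.smul_apply, LinearMap.smul_apply, smul_eq_mul]
  have col1 : ∑ i, C i * R (e i) a b d = R c a b d := by
    rw [← hC, map_sum, LinearMap.sum_apply, LinearMap.sum_apply, LinearMap.sum_apply]
    exact Finset.sum_congr rfl fun i _ => by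
      rw [map_smul, LinearMap.smul_apply, LinearMap.smul_apply, LinearMap.smul_apply, smul_eq_mul]
  calc ∑ i, ∑ j, ∑ k, ∑ l, R (e i) (e k) (e l) (e j) * (A k * B l) * (C i * D j)
      = ∑ i, ∑ k, ∑ l, ∑ j, R (e i) (e k) (e l) (e j) * (A k * B l) * (C i * D j) := by
        refine Finset.sum_congr rfl fun i _ => ?_
        rw [Finset.sum_comm]
        exact Finset.sum_congr rfl fun k _ => Finset.sum_comm
    _ = ∑ i, ∑ k, ∑ l, (A k * B l * C i) * R (e i) (e k) (e l) d := by
        refine Finset.sum_congr rfl fun i _ => Finset.sum_congr rfl fun k _ =>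
          Finset.sum_congr rfl fun l _ => ?_
        rw [← col4 (e i) (e k) (e l), Finset.mul_sum]
        exact Finset.sum_congr rfl fun j _ => by ring
    _ = ∑ i, ∑ k, (A k * C i) * R (e i) (e k) b d := by
        refine Finset.sum_congr rfl fun i _ => Finset.sum_congr rfl fun k _ => ?_
        rw [← col3 (e i) (e k), Finset.mul_sum]
        exact Finset.sum_congr rfl fun l _ => by ring
    _ = ∑ i, C i * R (e i) a b d := by
        refine Finset.sum_congr rfl fun i _ => ?_
        rw [← col2 (e i), Finset.mul_sum]
        exact Finset.sum_congr rfl fun k _ => by ring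
    _ = R c a b d := col1

end StmtFourAux

section StmtFourAux2

open Finset

def symTrSub (n : ℕ) : Submodule ℝ (Fin n → Fin n → ℝ) where
  carrier := {φ | IsSymTr φ}
  add_mem' := by
    rintro φ ψ ⟨hs1, ht1⟩ ⟨hs2, ht2⟩
    refine ⟨fun i j => ?_, ?_⟩
    · simp only [Pi.add_apply, hs1 i j, hs2 i j]
    · simp only [Pi.add_apply, Finset.sum_add_distrib, ht1, ht2, add_zero]
  zero_mem' := ⟨fun i j => rfl, by simp⟩
  smul_mem' := by
    rintro t φ ⟨hs, ht⟩
    refine ⟨fun i j => ?_, ?_⟩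
    · simp only [Pi.smul_apply, hs i j, smul_eq_mul]
    · simp only [Pi.smul_apply, smul_eq_mul, ← Finset.mul_sum, ht, mul_zero]

lemma mem_symTrSub {n : ℕ} (φ : Fin n → Fin n → ℝ) : φ ∈ symTrSub n ↔ IsSymTr φ :=
  Iff.rfl

lemma two_mul_card_le_pairs (n : ℕ) :
    2 * Fintype.card {p : Fin n × Fin n // p.1 ≤ p.2} = n * (n + 1) := by
  have hequiv : {p : Fin n × Fin n // p.1 ≤ p.2} ≃ Σ j : Fin n, Fin (j.1 + 1) :=
    { toFun := fun p => ⟨p.1.2, ⟨p.1.1.1, Nat.lt_succ_of_le p.2⟩⟩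
      invFun := fun q => ⟨(⟨q.2.1, by have := q.2.2; have := q.1.2; omega⟩, q.1),
        by show _ ≤ _; rw [Fin.le_def]; exact Nat.lt_succ_iff.mp q.2.2⟩
      left_inv := fun p => rfl
      right_inv := fun q => rfl }
  rw [Fintype.card_congr hequiv, Fintype.card_sigma]
  simp only [Fintype.card_fin]
  rw [Fin.sum_univ_eq_sum_range (fun j => j + 1) n, Finset.sum_add_distrib,
    Finset.sum_const, Finset.card_range, smul_eq_mul, mul_one]
  have h := Finset.sum_range_id_mul_two n
  have key : n * (n + 1) = n * (n - 1) + 2 * n := by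
    rcases n with _ | m
    · rfl
    · simp only [Nat.succ_sub_one]; ring
  calc 2 * (∑ i ∈ Finset.range n, i + n)
      = (∑ i ∈ Finset.range n, i) * 2 + 2 * n := by ring
    _ = n * (n - 1) + 2 * n := by rw [h]
    _ = n * (n + 1) := key.symm

lemma finrank_symTr_le (n N : ℕ) (hn : 3 ≤ n) (hN : 2 * N = (n - 1) * (n + 2)) :
    Module.finrank ℝ (symTrSub n) ≤ N := by
  obtain ⟨m, rfl⟩ : ∃ m, n = m + 1 := ⟨n - 1, by omega⟩
  classical
  set P : Fin (m+1) × Fin (m+1) → Prop :=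
    fun p => p.1 ≤ p.2 ∧ p ≠ (Fin.last m, Fin.last m) with hP
  let L : symTrSub (m+1) →ₗ[ℝ] ({p // P p} → ℝ) :=
    { toFun := fun φ p => φ.1 p.1.1 p.1.2
      map_add' := fun φ ψ => rfl
      map_smul' := fun t φ => rfl }
  have hinj : Function.Injective L := by
    intro φ ψ h
    apply Subtype.ext
    obtain ⟨φ, hφs, hφt⟩ := φ
    obtain ⟨ψ, hψs, hψt⟩ := ψ
    have hkey : ∀ i j : Fin (m+1), i ≤ j → ¬(i = Fin.last m ∧ j = Fin.last m) →
        φ i j = ψ i j := by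
      intro i j hij hne
      exact congrFun h ⟨(i, j), hij, by
        simp only [Prod.mk.injEq, ne_eq, Prod.ext_iff]
        tauto⟩
    have hdiag : ∀ i : Fin (m+1), i ≠ Fin.last m → φ i i = ψ i i := by
      intro i hi
      exact hkey i i le_rfl (fun hc => hi hc.1)
    have hlast : φ (Fin.last m) (Fin.last m) = ψ (Fin.last m) (Fin.last m) := by
      have h1 := Finset.add_sum_erase Finset.univ (fun i => φ i i)
        (Finset.mem_univ (Fin.last m))
      have h2 := Finset.add_sum_erase Finset.univ (fun i => ψ i i)
        (Finset.mem_univ (Fin.last m))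
      rw [hφt] at h1
      rw [hψt] at h2
      have h3 : ∑ i ∈ Finset.univ.erase (Fin.last m), φ i i
          = ∑ i ∈ Finset.univ.erase (Fin.last m), ψ i i :=
        Finset.sum_congr rfl fun i hi => hdiag i (Finset.ne_of_mem_erase hi)
      linarith
    have : ∀ i j, i ≤ j → φ i j = ψ i j := by
      intro i j hij
      by_cases hc : i = Fin.last m ∧ j = Fin.last m
      · rw [hc.1, hc.2]; exact hlast
      · exact hkey i j hij hc
    funext i j
    show φ i j = ψ i j
    rcases le_total i j with hij | hij
    · exact this i j hij
    · rw [hφs i j, hψs i j]; exact this j i hij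
  have hcard : Fintype.card {p // P p} = N := by
    have h1 := two_mul_card_le_pairs (m + 1)
    have hfilter : Finset.filter (fun p : Fin (m+1) × Fin (m+1) => p.1 ≤ p.2) Finset.univ
        = insert (Fin.last m, Fin.last m) (Finset.filter P Finset.univ) := by
      ext p
      simp only [Finset.mem_filter, Finset.mem_insert, Finset.mem_univ, true_and, hP]
      constructor
      · intro hle
        by_cases hc : p = (Fin.last m, Fin.last m)
        · exact Or.inl hc
        · exact Or.inr ⟨hle, hc⟩
      · rintro (rfl | ⟨hle, _⟩)
        · exact le_refl _
        · exact hle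
    have h2 : Fintype.card {p : Fin (m+1) × Fin (m+1) // p.1 ≤ p.2}
        = Fintype.card {p // P p} + 1 := by
      rw [Fintype.card_subtype, Fintype.card_subtype, hfilter,
        Finset.card_insert_of_notMem (by simp [hP]), add_comm]
    have hN' : 2 * N = m * (m + 3) := by
      have e1 : m + 1 - 1 = m := by omega
      have e2 : m + 1 + 2 = m + 3 := by omega
      rw [e1, e2] at hN
      exact hN
    have h3 : 2 * (Fintype.card {p // P p} + 1) = (m + 1) * (m + 1 + 1) := by
      rw [← h2]; exact h1
    have h4 : (m + 1) * (m + 1 + 1) = m * (m + 3) + 2 := by ring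
    have h5 : 2 * Fintype.card {p // P p} + 2 = 2 * N + 2 := by
      rw [hN']
      calc 2 * Fintype.card {p // P p} + 2
          = 2 * (Fintype.card {p // P p} + 1) := by ring
        _ = m * (m + 3) + 2 := by rw [h3, h4]
    omega
  calc Module.finrank ℝ (symTrSub (m+1))
      ≤ Module.finrank ℝ ({p // P p} → ℝ) := LinearMap.finrank_le_finrank_of_injective hinj
    _ = Fintype.card {p // P p} := Module.finrank_fintype_fun_eq_card ℝ
    _ = N := hcard

lemma key_ineq {N : ℕ} (lam : Fin N → ℝ) (hmono : Monotone lam)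
    (z o : Fin N) (hz : (z : ℕ) = 0) (ho : (o : ℕ) = 1)
    (c d : Fin N → ℝ) (hc : ∑ β, c β * c β = 2) (hd : ∑ β, d β * d β = 2)
    (hcd : ∑ β, c β * d β = 0) :
    2 * (lam z + lam o) ≤ ∑ β, lam β * (c β * c β + d β * d β) := by
  have hm_le : ∀ β, c β * c β + d β * d β ≤ 2 := by
    intro β
    have h1 : ∑ γ, (c β * c γ + d β * d γ) * (c β * c γ + d β * d γ)
        = 2 * (c β * c β + d β * d β) := by
      have hptwise : ∀ γ, (c β * c γ + d β * d γ) * (c β * c γ + d β * d γ)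
          = (c β * c β) * (c γ * c γ) + (2 * (c β * d β)) * (c γ * d γ)
            + (d β * d β) * (d γ * d γ) := fun γ => by ring
      calc ∑ γ, (c β * c γ + d β * d γ) * (c β * c γ + d β * d γ)
          = ∑ γ, ((c β * c β) * (c γ * c γ) + (2 * (c β * d β)) * (c γ * d γ)
              + (d β * d β) * (d γ * d γ)) := Finset.sum_congr rfl fun γ _ => hptwise γ
        _ = (c β * c β) * (∑ γ, c γ * c γ) + (2 * (c β * d β)) * (∑ γ, c γ * d γ)
              + (d β * d β) * (∑ γ, d γ * d γ) := by
            rw [Finset.sum_add_distrib, Finset.sum_add_distrib, ← Finset.mul_sum,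
              ← Finset.mul_sum, ← Finset.mul_sum]
        _ = 2 * (c β * c β + d β * d β) := by rw [hc, hd, hcd]; ring
    have h2 : (c β * c β + d β * d β) * (c β * c β + d β * d β)
        ≤ ∑ γ, (c β * c γ + d β * d γ) * (c β * c γ + d β * d γ) := by
      simpa using Finset.single_le_sum
        (f := fun γ => (c β * c γ + d β * d γ) * (c β * c γ + d β * d γ))
        (fun γ _ => mul_self_nonneg _) (Finset.mem_univ β)
    nlinarith [sq_nonneg (c β), sq_nonneg (d β)]
  have hsum_m : ∑ β, (c β * c β + d β * d β) = 4 := by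
    rw [Finset.sum_add_distrib, hc, hd]; norm_num
  have hzo : lam z ≤ lam o := hmono (by rw [Fin.le_def, hz, ho]; omega)
  have step : (lam z - lam o) * 2
      ≤ ∑ β, (lam β - lam o) * (c β * c β + d β * d β) := by
    rw [← Finset.add_sum_erase _ _ (Finset.mem_univ z)]
    have t1 : (lam z - lam o) * 2 ≤ (lam z - lam o) * (c z * c z + d z * d z) :=
      mul_le_mul_of_nonpos_left (hm_le z) (by linarith)
    have t2 : 0 ≤ ∑ β ∈ Finset.univ.erase z, (lam β - lam o) * (c β * c β + d β * d β) := by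
      refine Finset.sum_nonneg fun β hβ => ?_
      have hβz : β ≠ z := Finset.ne_of_mem_erase hβ
      have hle : lam o ≤ lam β := by
        refine hmono ?_
        rw [Fin.le_def, ho]
        have : (β : ℕ) ≠ 0 := fun hh => hβz (Fin.ext (by rw [hh, hz]))
        omega
      have := sq_nonneg (c β); have := sq_nonneg (d β)
      nlinarith
    linarith
  have expand : ∑ β, lam β * (c β * c β + d β * d β)
      = ∑ β, (lam β - lam o) * (c β * c β + d β * d β)
        + lam o * ∑ β, (c β * c β + d β * d β) := by
    rw [Finset.mul_sum, ← Finset.sum_add_distrib]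
    exact Finset.sum_congr rfl fun β _ => by ring
  rw [expand, hsum_m]
  linarith

lemma psum_two {N : ℕ} (lam : Fin N → ℝ) (z o : Fin N)
    (hz : (z : ℕ) = 0) (ho : (o : ℕ) = 1) :
    psum lam 2 = lam z + lam o := by
  have hfloor : ⌊(2 : ℝ)⌋₊ = 2 := by norm_num
  rw [psum, hfloor]
  have h0 : ((2 : ℝ) - ((2 : ℕ) : ℝ)) = 0 := by norm_num
  rw [h0, zero_mul, add_zero]
  have hfilt : Finset.univ.filter (fun i : Fin N => (i : ℕ) < 2) = {z, o} := by
    ext i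
    simp only [Finset.mem_filter, Finset.mem_univ, true_and, Finset.mem_insert,
      Finset.mem_singleton, Fin.ext_iff, hz, ho]
    omega
  rw [← Finset.sum_filter, hfilt, Finset.sum_insert (by
    simp only [Finset.mem_singleton, Fin.ext_iff, hz, ho]; omega), Finset.sum_singleton]

end StmtFourAux2

set_option maxHeartbeats 1000000 in
/-- if the curvature operator of the second kind is two-positive
(`λ₁ + λ₂ > 0`), then `R` has positive sectional curvature; if it is
two-nonnegative (`λ₁ + λ₂ ≥ 0`), then `R` has nonnegative sectional curvature. -/
theorem stmt_4 {V : Type*} [NormedAddCommGroup V] [InnerProductSpace ℝ V]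
    [FiniteDimensional ℝ V]
    (n : ℕ) (hn : 3 ≤ n) (hdim : Module.finrank ℝ V = n)
    (e : Fin n → V) (he : Orthonormal ℝ e)
    (R : CurvMap V) (hR : IsAlgCurv R)
    (N : ℕ) (hN : 2 * N = (n - 1) * (n + 2))
    (lam : Fin N → ℝ) (Φ : Fin N → Fin n → Fin n → ℝ)
    (hE : IsEigenSystem R e lam Φ) :
    (0 < psum lam 2 → ∀ x y : V, ‖x‖ = 1 → ‖y‖ = 1 → ⟪x, y⟫ = 0 →
      0 < R x y x y) ∧
    (0 ≤ psum lam 2 → ∀ x y : V, ‖x‖ = 1 → ‖y‖ = 1 → ⟪x, y⟫ = 0 →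
      0 ≤ R x y x y) := by
  classical
  obtain ⟨hmono, hsym, horth, heig⟩ := hE
  have hN2 : 2 ≤ N := by
    have h1 : 2 * 5 ≤ 2 * N := by
      rw [hN]; exact Nat.mul_le_mul (by omega) (by omega)
    omega
  set z : Fin N := ⟨0, by omega⟩ with hzdef
  set o : Fin N := ⟨1, by omega⟩ with hodef
  have hz : (z : ℕ) = 0 := rfl
  have ho : (o : ℕ) = 1 := rfl
  -- orthonormal basis facts
  have hne : Nonempty (Fin n) := ⟨⟨0, by omega⟩⟩
  have hcard : Fintype.card (Fin n) = Module.finrank ℝ V := by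
    rw [Fintype.card_fin, hdim]
  let bb : Module.Basis (Fin n) ℝ V := basisOfOrthonormalOfCardEqFinrank he hcard
  have hbb : ⇑bb = e := coe_basisOfOrthonormalOfCardEqFinrank he hcard
  let ob : OrthonormalBasis (Fin n) ℝ V := bb.toOrthonormalBasis (by rwa [hbb])
  have hob : ⇑ob = e := by rw [Module.Basis.coe_toOrthonormalBasis, hbb]
  have hrep : ∀ v : V, ∑ i, ⟪e i, v⟫ • e i = v := by
    intro v
    have h := ob.sum_repr' v
    rwa [hob] at h
  have hpars : ∀ v w : V, ∑ i, ⟪e i, v⟫ * ⟪e i, w⟫ = ⟪v, w⟫ := by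
    intro v w
    have h := ob.sum_inner_mul_inner v w
    rw [hob] at h
    rw [← h]
    exact Finset.sum_congr rfl fun i _ => by rw [real_inner_comm v (e i)]
  -- eigentensors as elements of the subspace
  let Φ' : Fin N → symTrSub n := fun β => ⟨Φ β, hsym β⟩
  have hLI : LinearIndependent ℝ Φ' := by
    rw [Fintype.linearIndependent_iff]
    intro g hg β
    have hg' : (∑ γ, g γ • Φ γ) = (0 : Fin n → Fin n → ℝ) := by
      have h := congrArg (fun v : symTrSub n => (v : Fin n → Fin n → ℝ)) hg
      simpa using h
    have hβ : tip (∑ γ, g γ • Φ γ) (Φ β) = g β := by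
      rw [tip_sum_left]
      calc ∑ γ, g γ * tip (Φ γ) (Φ β)
          = ∑ γ, g γ * (if γ = β then 1 else 0) :=
            Finset.sum_congr rfl fun γ _ => by rw [horth]
        _ = g β := by simp
    rw [hg'] at hβ
    rw [← hβ]
    simp [tip]
  have hrank : Module.finrank ℝ (symTrSub n) = N := by
    refine le_antisymm (finrank_symTr_le n N hn hN) ?_
    have h := hLI.fintype_card_le_finrank
    simpa using h
  haveI : Nonempty (Fin N) := ⟨z⟩
  have hspan : Submodule.span ℝ (Set.range Φ') = ⊤ :=
    hLI.span_eq_top_of_card_eq_finrank (by simpa using hrank.symm)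
  -- main inequality
  suffices hmain : ∀ x y : V, ‖x‖ = 1 → ‖y‖ = 1 → ⟪x, y⟫ = 0 →
      psum lam 2 ≤ 2 * R x y x y by
    constructor
    · intro hpos x y hx hy hxy
      have h := hmain x y hx hy hxy
      linarith
    · intro hpos x y hx hy hxy
      have h := hmain x y hx hy hxy
      linarith
  intro x y hx hy hxy
  have hXX : ∑ i, ⟪e i, x⟫ * ⟪e i, x⟫ = 1 := by
    rw [hpars, real_inner_self_eq_norm_mul_norm, hx]; norm_num
  have hYY : ∑ i, ⟪e i, y⟫ * ⟪e i, y⟫ = 1 := by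
    rw [hpars, real_inner_self_eq_norm_mul_norm, hy]; norm_num
  have hXY : ∑ i, ⟪e i, x⟫ * ⟪e i, y⟫ = 0 := by rw [hpars]; exact hxy
  have hYX : ∑ i, ⟪e i, y⟫ * ⟪e i, x⟫ = 0 := by
    rw [hpars, real_inner_comm]; exact hxy
  set U : Fin n → Fin n → ℝ :=
    fun i j => ⟪e i, x⟫ * ⟪e j, y⟫ + ⟪e i, y⟫ * ⟪e j, x⟫ with hUdef
  set W : Fin n → Fin n → ℝ :=
    fun i j => ⟪e i, x⟫ * ⟪e j, x⟫ - ⟪e i, y⟫ * ⟪e j, y⟫ with hWdef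
  have hUmem : IsSymTr U := by
    constructor
    · intro i j; simp only [hUdef]; ring
    · simp only [hUdef]
      rw [Finset.sum_add_distrib, hXY, hYX]; norm_num
  have hWmem : IsSymTr W := by
    constructor
    · intro i j; simp only [hWdef]; ring
    · simp only [hWdef]
      rw [Finset.sum_sub_distrib, hXX, hYY]; norm_num
  have htipUU : tip U U = 2 := by
    have e1 : tip U U = ∑ i, ∑ j,
        ((⟪e i, x⟫ * ⟪e j, y⟫) * (⟪e i, x⟫ * ⟪e j, y⟫)
         + (⟪e i, x⟫ * ⟪e j, y⟫) * (⟪e i, y⟫ * ⟪e j, x⟫)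
         + (⟪e i, y⟫ * ⟪e j, x⟫) * (⟪e i, x⟫ * ⟪e j, y⟫)
         + (⟪e i, y⟫ * ⟪e j, x⟫) * (⟪e i, y⟫ * ⟪e j, x⟫)) := by
      rw [tip]
      exact Finset.sum_congr rfl fun i _ => Finset.sum_congr rfl fun j _ => by
        simp only [hUdef]; ring
    rw [e1]
    simp only [Finset.sum_add_distrib]
    rw [tip_rank1, tip_rank1, tip_rank1, tip_rank1, hXX, hYY, hXY, hYX]
    norm_num
  have htipWW : tip W W = 2 := by
    have e1 : tip W W = ∑ i, ∑ j,
        ((⟪e i, x⟫ * ⟪e j, x⟫) * (⟪e i, x⟫ * ⟪e j, x⟫)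
         - (⟪e i, x⟫ * ⟪e j, x⟫) * (⟪e i, y⟫ * ⟪e j, y⟫)
         - (⟪e i, y⟫ * ⟪e j, y⟫) * (⟪e i, x⟫ * ⟪e j, x⟫)
         + (⟪e i, y⟫ * ⟪e j, y⟫) * (⟪e i, y⟫ * ⟪e j, y⟫)) := by
      rw [tip]
      exact Finset.sum_congr rfl fun i _ => Finset.sum_congr rfl fun j _ => by
        simp only [hWdef]; ring
    rw [e1]
    simp only [Finset.sum_add_distrib, Finset.sum_sub_distrib]
    rw [tip_rank1, tip_rank1, tip_rank1, tip_rank1, hXX, hYY, hXY, hYX]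
    norm_num
  have htipUW : tip U W = 0 := by
    have e1 : tip U W = ∑ i, ∑ j,
        ((⟪e i, x⟫ * ⟪e j, y⟫) * (⟪e i, x⟫ * ⟪e j, x⟫)
         - (⟪e i, x⟫ * ⟪e j, y⟫) * (⟪e i, y⟫ * ⟪e j, y⟫)
         + (⟪e i, y⟫ * ⟪e j, x⟫) * (⟪e i, x⟫ * ⟪e j, x⟫)
         - (⟪e i, y⟫ * ⟪e j, x⟫) * (⟪e i, y⟫ * ⟪e j, y⟫)) := by
      rw [tip]
      exact Finset.sum_congr rfl fun i _ => Finset.sum_congr rfl fun j _ => by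
        simp only [hUdef, hWdef]; ring
    rw [e1]
    simp only [Finset.sum_add_distrib, Finset.sum_sub_distrib]
    rw [tip_rank1, tip_rank1, tip_rank1, tip_rank1, hXX, hYY, hXY, hYX]
    norm_num
  have hsokUU : sok R e U U = 2 * R x y x y := by
    have e1 : sok R e U U = ∑ i, ∑ j, ∑ k, ∑ l,
        (R (e i) (e k) (e l) (e j) * (⟪e k, x⟫ * ⟪e l, y⟫) * (⟪e i, x⟫ * ⟪e j, y⟫)
         + R (e i) (e k) (e l) (e j) * (⟪e k, x⟫ * ⟪e l, y⟫) * (⟪e i, y⟫ * ⟪e j, x⟫)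
         + R (e i) (e k) (e l) (e j) * (⟪e k, y⟫ * ⟪e l, x⟫) * (⟪e i, x⟫ * ⟪e j, y⟫)
         + R (e i) (e k) (e l) (e j) * (⟪e k, y⟫ * ⟪e l, x⟫) * (⟪e i, y⟫ * ⟪e j, x⟫)) := by
      rw [sok]
      exact Finset.sum_congr rfl fun i _ => Finset.sum_congr rfl fun j _ =>
        Finset.sum_congr rfl fun k _ => Finset.sum_congr rfl fun l _ => by
          simp only [hUdef]; ring
    rw [e1]
    simp only [Finset.sum_add_distrib]
    rw [quad_expand R e _ _ _ _ x y x y (hrep x) (hrep y) (hrep x) (hrep y),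
        quad_expand R e _ _ _ _ x y y x (hrep x) (hrep y) (hrep y) (hrep x),
        quad_expand R e _ _ _ _ y x x y (hrep y) (hrep x) (hrep x) (hrep y),
        quad_expand R e _ _ _ _ y x y x (hrep y) (hrep x) (hrep y) (hrep x)]
    have hz1 : R x x y y = 0 := by have h := hR.antisymm x x y y; linarith
    have hz2 : R y y x x = 0 := by have h := hR.antisymm y y x x; linarith
    have hsw : R y x y x = R x y x y := by
      have h1 := hR.antisymm y x y x
      have h2 := hR.pairSymm x y y x
      have h3 := hR.antisymm y x x y
      linarith
    linarith
  have hsokWW : sok R e W W = 2 * R x y x y := by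
    have e1 : sok R e W W = ∑ i, ∑ j, ∑ k, ∑ l,
        (R (e i) (e k) (e l) (e j) * (⟪e k, x⟫ * ⟪e l, x⟫) * (⟪e i, x⟫ * ⟪e j, x⟫)
         - R (e i) (e k) (e l) (e j) * (⟪e k, x⟫ * ⟪e l, x⟫) * (⟪e i, y⟫ * ⟪e j, y⟫)
         - R (e i) (e k) (e l) (e j) * (⟪e k, y⟫ * ⟪e l, y⟫) * (⟪e i, x⟫ * ⟪e j, x⟫)
         + R (e i) (e k) (e l) (e j) * (⟪e k, y⟫ * ⟪e l, y⟫) * (⟪e i, y⟫ * ⟪e j, y⟫)) := by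
      rw [sok]
      exact Finset.sum_congr rfl fun i _ => Finset.sum_congr rfl fun j _ =>
        Finset.sum_congr rfl fun k _ => Finset.sum_congr rfl fun l _ => by
          simp only [hWdef]; ring
    rw [e1]
    simp only [Finset.sum_add_distrib, Finset.sum_sub_distrib]
    rw [quad_expand R e _ _ _ _ x x x x (hrep x) (hrep x) (hrep x) (hrep x),
        quad_expand R e _ _ _ _ x x y y (hrep x) (hrep x) (hrep y) (hrep y),
        quad_expand R e _ _ _ _ y y x x (hrep y) (hrep y) (hrep x) (hrep x),
        quad_expand R e _ _ _ _ y y y y (hrep y) (hrep y) (hrep y) (hrep y)]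
    have hz1 : R x x x x = 0 := by have h := hR.antisymm x x x x; linarith
    have hz2 : R y y y y = 0 := by have h := hR.antisymm y y y y; linarith
    have h3 := hR.antisymm y x x y
    have h2 := hR.pairSymm x y y x
    linarith
  -- expand U and W in the eigenbasis
  have hmemU : (⟨U, hUmem⟩ : symTrSub n) ∈ Submodule.span ℝ (Set.range Φ') := by
    rw [hspan]; exact Submodule.mem_top
  have hmemW : (⟨W, hWmem⟩ : symTrSub n) ∈ Submodule.span ℝ (Set.range Φ') := by
    rw [hspan]; exact Submodule.mem_top
  obtain ⟨c, hc⟩ := (Submodule.mem_span_range_iff_exists_fun ℝ).1 hmemU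
  obtain ⟨d, hd⟩ := (Submodule.mem_span_range_iff_exists_fun ℝ).1 hmemW
  have hcU : ∑ β, c β • Φ β = U := by
    have h := congrArg (fun v : symTrSub n => (v : Fin n → Fin n → ℝ)) hc
    simpa using h
  have hdW : ∑ β, d β • Φ β = W := by
    have h := congrArg (fun v : symTrSub n => (v : Fin n → Fin n → ℝ)) hd
    simpa using h
  have htc : ∀ β, tip (Φ β) U = c β := by
    intro β
    rw [← hcU, tip_comm, tip_sum_left]
    calc ∑ γ, c γ * tip (Φ γ) (Φ β)
        = ∑ γ, c γ * (if γ = β then 1 else 0) :=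
          Finset.sum_congr rfl fun γ _ => by rw [horth]
      _ = c β := by simp
  have htd : ∀ β, tip (Φ β) W = d β := by
    intro β
    rw [← hdW, tip_comm, tip_sum_left]
    calc ∑ γ, d γ * tip (Φ γ) (Φ β)
        = ∑ γ, d γ * (if γ = β then 1 else 0) :=
          Finset.sum_congr rfl fun γ _ => by rw [horth]
      _ = d β := by simp
  have hsumcc : ∑ β, c β * c β = 2 := by
    have h1 : tip U U = ∑ β, c β * c β := by
      calc tip U U = tip (∑ β, c β • Φ β) U := by rw [hcU]
        _ = ∑ β, c β * tip (Φ β) U := tip_sum_left _ _ _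
        _ = ∑ β, c β * c β := Finset.sum_congr rfl fun β _ => by rw [htc β]
    rw [htipUU] at h1
    exact h1.symm
  have hsumdd : ∑ β, d β * d β = 2 := by
    have h1 : tip W W = ∑ β, d β * d β := by
      calc tip W W = tip (∑ β, d β • Φ β) W := by rw [hdW]
        _ = ∑ β, d β * tip (Φ β) W := tip_sum_left _ _ _
        _ = ∑ β, d β * d β := Finset.sum_congr rfl fun β _ => by rw [htd β]
    rw [htipWW] at h1
    exact h1.symm
  have hsumcd : ∑ β, c β * d β = 0 := by
    have h1 : tip U W = ∑ β, c β * d β := by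
      calc tip U W = tip (∑ β, c β • Φ β) W := by rw [hcU]
        _ = ∑ β, c β * tip (Φ β) W := tip_sum_left _ _ _
        _ = ∑ β, c β * d β := Finset.sum_congr rfl fun β _ => by rw [htd β]
    rw [htipUW] at h1
    exact h1.symm
  have hEU : sok R e U U = ∑ β, lam β * (c β * c β) := by
    calc sok R e U U = sok R e (∑ β, c β • Φ β) U := by rw [hcU]
      _ = ∑ β, c β * sok R e (Φ β) U := sok_sum_left _ _ _ _ _
      _ = ∑ β, c β * (lam β * tip (Φ β) U) :=
          Finset.sum_congr rfl fun β _ => by rw [heig β U hUmem]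
      _ = ∑ β, lam β * (c β * c β) :=
          Finset.sum_congr rfl fun β _ => by rw [htc β]; ring
  have hEW : sok R e W W = ∑ β, lam β * (d β * d β) := by
    calc sok R e W W = sok R e (∑ β, d β • Φ β) W := by rw [hdW]
      _ = ∑ β, d β * sok R e (Φ β) W := sok_sum_left _ _ _ _ _
      _ = ∑ β, d β * (lam β * tip (Φ β) W) :=
          Finset.sum_congr rfl fun β _ => by rw [heig β W hWmem]
      _ = ∑ β, lam β * (d β * d β) :=
          Finset.sum_congr rfl fun β _ => by rw [htd β]; ring
  have hk := key_ineq lam hmono z o hz ho c d hsumcc hsumdd hsumcd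
  have h4 : ∑ β, lam β * (c β * c β + d β * d β) = 4 * R x y x y := by
    have hsplit : ∑ β, lam β * (c β * c β + d β * d β)
        = ∑ β, lam β * (c β * c β) + ∑ β, lam β * (d β * d β) := by
      rw [← Finset.sum_add_distrib]
      exact Finset.sum_congr rfl fun β _ => by ring
    rw [hsplit, ← hEU, ← hEW, hsokUU, hsokWW]
    ring
  rw [psum_two lam z o hz ho]
  linarith
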